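/- arXiv:1612.05931 — 2 statements merged into one kernel-verified Lean document; each statement's English description precedes it below -/
import Mathlib

section
/- Let q be a power of the prime p and let n ≥ 2 be an integer such that every prime divisor of n divides p(q−1). Then n is F_q-practical, i.e., for every integer k with 1 ≤ k ≤ n−1 there exists a polynomial of degree k in F_q[x] dividing x^n − 1. -/
/-!
Induct on `n`, writing `n = m * ℓ` with `ℓ` prime. If `ℓ = p`, then `Xⁿ - 1 = (Xᵐ - 1)ᵖ`;
if `ℓ ∣ q - 1`, then `F_q` contains the `ℓ`-th roots of unity and
`Xⁿ - 1 = ∏_{ζ^ℓ = 1} (Xᵐ - ζ)`. In both cases `Xⁿ - 1` is divisible by `(Xᵐ - 1) * hⱼ`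
with `deg hⱼ = j * m` for every `j < ℓ`. Multiplying `hⱼ` by the divisors of `Xᵐ - 1`,
which exist in every degree `r ≤ m` by induction, gives divisors of `Xⁿ - 1` in every
degree `j * m + r ≤ n`.
-/

open Polynomial

namespace Polynomial

variable {R : Type*}

def HasDivisorsOfAllDegrees [CommSemiring R] (f : R[X]) : Prop :=
  ∀ k ≤ f.natDegree, ∃ g : R[X], g.natDegree = k ∧ g ∣ f

theorem hasDivisorsOfAllDegrees_of_natDegree_le_one [CommSemiring R] {f : R[X]}
    (hf : f.natDegree ≤ 1) : HasDivisorsOfAllDegrees f := by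
  intro k hk
  obtain rfl | rfl : k = 0 ∨ k = f.natDegree := by omega
  · exact ⟨1, natDegree_one, one_dvd f⟩
  · exact ⟨f, rfl, dvd_rfl⟩

theorem HasDivisorsOfAllDegrees.of_forall_mul_dvd [CommSemiring R] [NoZeroDivisors R]
    {f F : R[X]} {ℓ : ℕ} (hf : HasDivisorsOfAllDegrees f)
    (hFdeg : F.natDegree = f.natDegree * ℓ)
    (hchain : ∀ j < ℓ, ∃ h : R[X], h.natDegree = f.natDegree * j ∧ f * h ∣ F) :
    HasDivisorsOfAllDegrees F := by
  intro k hk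
  obtain rfl | hk := hk.eq_or_lt
  · exact ⟨F, rfl, dvd_rfl⟩
  have hF : F ≠ 0 := ne_zero_of_natDegree_gt hk
  set m := f.natDegree
  have hm : 0 < m := Nat.pos_of_ne_zero fun h => by simp [h] at hFdeg; omega
  have hj : k / m < ℓ := (Nat.div_lt_iff_lt_mul hm).2 (by rwa [mul_comm, ← hFdeg])
  obtain ⟨h, hhdeg, hdvd⟩ := hchain (k / m) hj
  obtain ⟨d, hddeg, hdf⟩ := hf (k % m) (Nat.mod_lt k hm).le
  have hdh : d * h ∣ F := (mul_dvd_mul_right hdf h).trans hdvd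
  have hd : d ≠ 0 := left_ne_zero_of_mul (ne_zero_of_dvd_ne_zero hF hdh)
  have hh : h ≠ 0 := right_ne_zero_of_mul (ne_zero_of_dvd_ne_zero hF hdh)
  refine ⟨d * h, ?_, hdh⟩
  rw [natDegree_mul hd hh, hddeg, hhdeg, add_comm, Nat.div_add_mod]

section CommRing

variable [CommRing R]

theorem natDegree_X_pow_sub_one [Nontrivial R] (n : ℕ) : (X ^ n - 1 : R[X]).natDegree = n := by
  rw [← C_1, natDegree_X_pow_sub_C]

theorem exists_mul_dvd_X_pow_mul_sub_one_of_expChar [Nontrivial R] {p : ℕ} [ExpChar R p]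
    {m : ℕ} (hm : m ≠ 0) {j : ℕ} (hj : j < p) :
    ∃ h : R[X], h.natDegree = m * j ∧ (X ^ m - 1) * h ∣ X ^ (m * p) - 1 := by
  have hmonic : (X ^ m - 1 : R[X]).Monic := by simpa using monic_X_pow_sub_C (1 : R) hm
  refine ⟨(X ^ m - 1) ^ j, by rw [hmonic.natDegree_pow, natDegree_X_pow_sub_one, mul_comm], ?_⟩
  calc (X ^ m - 1) * (X ^ m - 1) ^ j = (X ^ m - 1 : R[X]) ^ (j + 1) := (pow_succ' _ _).symm
    _ ∣ (X ^ m - 1) ^ p := pow_dvd_pow _ hj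
    _ = X ^ (m * p) - 1 := by rw [sub_pow_expChar, one_pow, pow_mul]

theorem X_pow_mul_sub_one_eq_prod [IsDomain R] {ζ : R} {ℓ : ℕ} (hℓ : 0 < ℓ)
    (hζ : IsPrimitiveRoot ζ ℓ) (m : ℕ) :
    (X ^ (m * ℓ) - 1 : R[X]) = ∏ c ∈ nthRootsFinset ℓ (1 : R), (X ^ m - C c) := by
  simpa [sub_comp, pow_comp, X_comp, one_comp, prod_comp, C_comp, ← pow_mul]
    using congrArg (comp · (X ^ m : R[X])) (X_pow_sub_one_eq_prod hℓ hζ)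

theorem exists_mul_dvd_X_pow_mul_sub_one_of_isPrimitiveRoot [IsDomain R] {ζ : R} {ℓ : ℕ}
    (hζ : IsPrimitiveRoot ζ ℓ) {m : ℕ} (hm : m ≠ 0) {j : ℕ} (hj : j < ℓ) :
    ∃ h : R[X], h.natDegree = m * j ∧ (X ^ m - 1) * h ∣ X ^ (m * ℓ) - 1 := by
  classical
  have hℓ : 0 < ℓ := by omega
  have h1 : (1 : R) ∈ nthRootsFinset ℓ (1 : R) := one_mem_nthRootsFinset hℓ
  obtain ⟨T, hT, hTcard⟩ :=
    Finset.exists_subset_card_eq (s := (nthRootsFinset ℓ (1 : R)).erase 1) (n := j) (by rw [Finset.card_erase_of_mem h1, hζ.card_nthRootsFinset]; omega)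
  have hmonic : ∀ c ∈ T, (X ^ m - C c : R[X]).Monic := fun c _ => monic_X_pow_sub_C c hm
  refine ⟨∏ c ∈ T, (X ^ m - C c), ?_, ?_⟩
  · simp [natDegree_prod_of_monic _ _ hmonic, hTcard, mul_comm]
  · have hT1 : (1 : R) ∉ T := fun h => Finset.notMem_erase _ _ (hT h)
    rw [X_pow_mul_sub_one_eq_prod hℓ hζ, ← C_1,
      ← Finset.prod_insert (f := fun c => X ^ m - C c) hT1]
    exact Finset.prod_dvd_prod_of_subset _ _ _
      (Finset.insert_subset h1 (hT.trans (Finset.erase_subset _ _)))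

end CommRing

end Polynomial

namespace FiniteField

variable {F : Type*} [Field F] [Fintype F]

theorem exists_isPrimitiveRoot_of_prime_dvd_card_sub_one {ℓ : ℕ} (hℓ : ℓ.Prime)
    (hdvd : ℓ ∣ Fintype.card F - 1) : ∃ ζ : F, IsPrimitiveRoot ζ ℓ := by
  classical
  have := Fact.mk hℓ
  obtain ⟨ζ, hζ⟩ := exists_prime_orderOf_dvd_card (G := Fˣ) ℓ (by rwa [Fintype.card_units])
  exact ⟨ζ, IsPrimitiveRoot.coe_units_iff.2 (hζ ▸ IsPrimitiveRoot.orderOf ζ)⟩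

theorem exists_mul_dvd_X_pow_mul_sub_one {p : ℕ} [CharP F p] {ℓ : ℕ} (hℓ : ℓ.Prime)
    (hdvd : ℓ ∣ p * (Fintype.card F - 1)) {m : ℕ} (hm : m ≠ 0) {j : ℕ} (hj : j < ℓ) :
    ∃ h : F[X], h.natDegree = m * j ∧ (X ^ m - 1) * h ∣ X ^ (m * ℓ) - 1 := by
  rcases hℓ.dvd_mul.1 hdvd with hℓp | hℓq
  · have hp := CharP.char_is_prime F p
    obtain rfl := (Nat.prime_dvd_prime_iff_eq hℓ hp).1 hℓp
    have := ExpChar.prime (R := F) hp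
    exact exists_mul_dvd_X_pow_mul_sub_one_of_expChar hm hj
  · obtain ⟨ζ, hζ⟩ := exists_isPrimitiveRoot_of_prime_dvd_card_sub_one hℓ hℓq
    exact exists_mul_dvd_X_pow_mul_sub_one_of_isPrimitiveRoot hζ hm hj

theorem hasDivisorsOfAllDegrees_X_pow_sub_one (p : ℕ) [CharP F p] {n : ℕ}
    (hn : ∀ ℓ : ℕ, ℓ.Prime → ℓ ∣ n → ℓ ∣ p * (Fintype.card F - 1)) :
    HasDivisorsOfAllDegrees (X ^ n - 1 : F[X]) := by
  induction n using Nat.strong_induction_on with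
  | _ n ih =>
  rcases le_or_gt n 1 with hn1 | hn1
  · exact hasDivisorsOfAllDegrees_of_natDegree_le_one (by rwa [natDegree_X_pow_sub_one])
  obtain ⟨ℓ, hℓ, m, rfl⟩ := Nat.exists_prime_and_dvd (show n ≠ 1 by omega)
  have hm : m ≠ 0 := by rintro rfl; omega
  have hXm := ih m (lt_mul_left (Nat.pos_of_ne_zero hm) hℓ.one_lt)
    fun r hr hrm => hn r hr (hrm.mul_left ℓ)
  rw [mul_comm] at hn ⊢
  refine hXm.of_forall_mul_dvd (ℓ := ℓ)
    (by rw [natDegree_X_pow_sub_one, natDegree_X_pow_sub_one]) fun j hj => ?_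
  rw [natDegree_X_pow_sub_one]
  exact exists_mul_dvd_X_pow_mul_sub_one hℓ (hn ℓ hℓ (dvd_mul_left ℓ m)) hm hj

end FiniteField

theorem stmt_16_general (Fq : Type*) [Field Fq] [Fintype Fq] (p : ℕ)
    [CharP Fq p] (q : ℕ) (hq : q = Fintype.card Fq) (n : ℕ)
    (hdiv : ∀ ℓ : ℕ, ℓ.Prime → ℓ ∣ n → ℓ ∣ p * (q - 1)) :
    ∀ k : ℕ, 1 ≤ k → k ≤ n - 1 →
      ∃ f : Polynomial Fq, f.natDegree = k ∧ f ∣ (X ^ n - 1 : Polynomial Fq) := by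
  subst hq
  intro k _ hk
  exact FiniteField.hasDivisorsOfAllDegrees_X_pow_sub_one p hdiv k
    (by rw [natDegree_X_pow_sub_one]; omega)

/-- Let `F_q` be a finite field of characteristic `p` and let `n ≥ 2` be an integer such
that every prime divisor of `n` divides `p(q-1)`.  Then `n` is `F_q`-practical: for every
`1 ≤ k ≤ n-1` there exists a polynomial of degree `k` in `F_q[x]` dividing `xⁿ - 1`. -/
theorem stmt_16 (Fq : Type*) [Field Fq] [Fintype Fq] (p : ℕ) (hp : p.Prime)
    [CharP Fq p] (q : ℕ) (hq : q = Fintype.card Fq) (n : ℕ) (hn : 2 ≤ n)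
    (hdiv : ∀ ℓ : ℕ, ℓ.Prime → ℓ ∣ n → ℓ ∣ p * (q - 1)) :
    ∀ k : ℕ, 1 ≤ k → k ≤ n - 1 →
      ∃ f : Polynomial Fq, f.natDegree = k ∧ f ∣ (X ^ n - 1 : Polynomial Fq) :=
  stmt_16_general Fq p q hq n hdiv
end

section
/- Let q be a power of the prime p, let t ≥ 0 be an integer and set n = p^t. Then the number of k-normal elements of F_{q^n} over F_q equals 1 if k = n, and equals (q−1)·q^{n−k−1} for every integer k with 0 ≤ k ≤ n−1. -/
open Polynomial

/-- For `f = Σ aᵢ xⁱ ∈ F_q[x]` and `α ∈ F_{qⁿ}`, `qmap f α = Σ aᵢ α^(qⁱ)` (the action of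
the `q`-associate linearized polynomial of `f` on `α`, i.e. `f ∘ α`). -/
noncomputable def qmap {Fq Fqn : Type*} [Field Fq] [Fintype Fq] [Field Fqn] [Algebra Fq Fqn]
    (f : Polynomial Fq) (α : Fqn) : Fqn :=
  f.sum fun i a => a • α ^ (Fintype.card Fq) ^ i

/-- The `F_q`-subspace of `F_{qⁿ}` spanned by `α, α^q, …, α^(q^(n-1))`. -/
noncomputable def conjSpan (Fq : Type*) {Fqn : Type*} [Field Fq] [Fintype Fq] [Field Fqn]
    [Algebra Fq Fqn] (n : ℕ) (α : Fqn) : Submodule Fq Fqn :=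
  Submodule.span Fq ((fun i : ℕ => α ^ (Fintype.card Fq) ^ i) '' Set.Iio n)

/-!
The Frobenius `σ : x ↦ x ^ q` is an `F_q`-linear map of `F_{qⁿ}` with `σ ^ n = 1`. As `n = p ^ t`,
the map `N = σ - 1` satisfies `N ^ n = σ ^ n - 1 = 0`, and the span of `α, σ α, …, σ^(n-1) α`
equals the span of `α, N α, …, N^(n-1) α`, whose dimension is the least `m` with `N ^ m α = 0`.
The kernel of `N` consists of the roots of `X ^ q - X`, so it has dimension at most one; hence
`N` is a single nilpotent Jordan block and `dim ker N ^ m = m` for `m ≤ n`. The elements whose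
span has dimension `m ≥ 1` therefore form `ker N ^ m \ ker N ^ (m - 1)`, a set of
`q ^ m - q ^ (m - 1)` elements.
-/

open Module Set Submodule

theorem Module.End.pow_apply_eq_zero_of_le {R M : Type*} [Semiring R] [AddCommMonoid M]
    [Module R M] (f : Module.End R M) {m k : ℕ} (hmk : m ≤ k) {v : M} (hv : (f ^ m) v = 0) :
    (f ^ k) v = 0 := by
  obtain ⟨d, rfl⟩ := Nat.exists_eq_add_of_le hmk
  rw [add_comm, pow_add, Module.End.mul_apply, hv, map_zero]

theorem Module.End.span_add_algebraMap_pow_apply_le {R M : Type*} [CommSemiring R]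
    [AddCommMonoid M] [Module R M] (f : Module.End R M) (c : R) (v : M) (N : ℕ) :
    span R ((fun i ↦ ((f + algebraMap R _ c) ^ i) v) '' Iio N) ≤
      span R ((fun i ↦ (f ^ i) v) '' Iio N) := by
  set S : ℕ → Submodule R M := fun N ↦ span R ((fun i ↦ (f ^ i) v) '' Iio N)
  have hS_mono : Monotone S := fun a b hab ↦ span_mono (image_mono (Iio_subset_Iio hab))
  have hS_map (N : ℕ) : (S N).map f ≤ S (N + 1) := by
    rw [map_span, span_le]
    rintro - ⟨-, ⟨i, hi, rfl⟩, rfl⟩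
    exact subset_span ⟨i + 1, Nat.succ_lt_succ hi, by simp only [pow_succ', Module.End.mul_apply]⟩
  have hmem (i : ℕ) : ((f + algebraMap R _ c) ^ i) v ∈ S (i + 1) := by
    induction i with
    | zero => exact subset_span ⟨0, Nat.zero_lt_one, rfl⟩
    | succ i ih =>
      rw [pow_succ', Module.End.mul_apply, LinearMap.add_apply, Module.algebraMap_end_apply]
      exact add_mem (hS_map _ (mem_map_of_mem ih)) (hS_mono (i + 1).le_succ (smul_mem _ c ih))
  rw [span_le]
  rintro - ⟨i, hi, rfl⟩
  exact hS_mono (Nat.succ_le_of_lt hi) (hmem i)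

theorem Module.End.span_sub_one_pow_apply_eq {R M : Type*} [CommRing R] [AddCommGroup M]
    [Module R M] (f : Module.End R M) (v : M) (N : ℕ) :
    span R ((fun i ↦ ((f - 1) ^ i) v) '' Iio N) = span R ((fun i ↦ (f ^ i) v) '' Iio N) := by
  have hsub : f - 1 = f + algebraMap R _ (-1) := by rw [map_neg, map_one, sub_eq_add_neg]
  have hadd : f = (f - 1) + algebraMap R _ 1 := by rw [map_one, sub_add_cancel]
  apply le_antisymm
  · rw [hsub]
    exact f.span_add_algebraMap_pow_apply_le (-1) v N
  · conv_lhs => rw [hadd]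
    exact (f - 1).span_add_algebraMap_pow_apply_le 1 v N

theorem LinearMap.finrank_ker_comp_le {K U V W : Type*} [Field K] [AddCommGroup U] [Module K U]
    [AddCommGroup V] [Module K V] [AddCommGroup W] [Module K W] [FiniteDimensional K U]
    [FiniteDimensional K V] (f : V →ₗ[K] W) (g : U →ₗ[K] V) :
    finrank K (ker (f ∘ₗ g)) ≤ finrank K (ker f) + finrank K (ker g) := by
  have hg : ∀ x ∈ ker (f ∘ₗ g), g x ∈ ker f := fun _ hx ↦ hx
  have hrange : finrank K (range (g.restrict hg)) ≤ finrank K (ker f) := Submodule.finrank_le _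
  have hker : finrank K (ker (g.restrict hg)) ≤ finrank K (ker g) := by
    rw [LinearMap.ker_restrict hg, ← Submodule.finrank_map_subtype_eq]
    exact Submodule.finrank_mono (Submodule.map_comap_le _ _)
  have := (g.restrict hg).finrank_range_add_finrank_ker
  omega

theorem Submodule.natCard_sdiff_of_le {R M : Type*} [Semiring R] [AddCommMonoid M] [Module R M]
    [Finite M] {S T : Submodule R M} (hST : S ≤ T) :
    Nat.card ↥((T : Set M) \ S) = Nat.card T - Nat.card S := by
  simp only [Nat.card_coe_set_eq, Set.ncard_sdiff (SetLike.coe_subset_coe.mpr hST)]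
  rfl

namespace Module.End

section Cyclic

variable {K V : Type*} [Field K] [AddCommGroup V] [Module K V] (L : Module.End K V)

theorem linearIndependent_pow_apply {m : ℕ} {v : V} (hm : (L ^ m) v ≠ 0)
    (hm' : (L ^ (m + 1)) v = 0) :
    LinearIndependent K (fun i : Fin (m + 1) ↦ (L ^ (i : ℕ)) v) := by
  induction m generalizing v with
  | zero => simpa [linearIndependent_unique_iff] using hm
  | succ m ih =>
    have hLv : LinearIndependent K (fun i : Fin (m + 1) ↦ (L ^ (i : ℕ)) (L v)) := by
      simp only [← Module.End.mul_apply, ← pow_succ] at ih ⊢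
      exact ih hm hm'
    have hspan : span K (range fun i : Fin (m + 1) ↦ (L ^ (i : ℕ)) (L v)) ≤
        LinearMap.ker (L ^ (m + 1)) := by
      rw [span_le]
      rintro - ⟨i, rfl⟩
      rw [SetLike.mem_coe, LinearMap.mem_ker, ← Module.End.mul_apply, ← Module.End.mul_apply,
        ← pow_add, ← pow_succ]
      exact L.pow_apply_eq_zero_of_le (by omega) hm'
    convert hLv.finCons (x := v) (fun h ↦ hm (hspan h)) using 1
    ext i
    refine Fin.cases ?_ (fun i ↦ ?_) i
    · simp
    · simp [← Module.End.mul_apply, ← pow_succ]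

theorem finrank_span_pow_apply {m N : ℕ} {v : V} (hm : (L ^ m) v ≠ 0)
    (hm' : (L ^ (m + 1)) v = 0) (hmN : m < N) :
    finrank K (span K ((fun i ↦ (L ^ i) v) '' Iio N)) = m + 1 := by
  have hspan : span K ((fun i ↦ (L ^ i) v) '' Iio N) =
      span K (range fun i : Fin (m + 1) ↦ (L ^ (i : ℕ)) v) := by
    apply le_antisymm <;> rw [span_le]
    · rintro - ⟨i, -, rfl⟩
      rcases le_or_gt i m with him | hmi
      · exact subset_span ⟨⟨i, Nat.lt_succ_of_le him⟩, rfl⟩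
      · simp only [SetLike.mem_coe, L.pow_apply_eq_zero_of_le hmi hm', zero_mem]
    · rintro - ⟨i, rfl⟩
      exact subset_span ⟨i, i.is_le.trans_lt hmN, rfl⟩
  rw [hspan, finrank_span_eq_card (L.linearIndependent_pow_apply hm hm'), Fintype.card_fin]

theorem exists_pow_apply_ne_zero_and_pow_succ_apply_eq_zero {N : ℕ} {v : V} (hv : v ≠ 0)
    (hN : (L ^ N) v = 0) : ∃ m < N, (L ^ m) v ≠ 0 ∧ (L ^ (m + 1)) v = 0 := by
  induction N with
  | zero => exact absurd hN (by simpa using hv)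
  | succ N ih =>
    by_cases h : (L ^ N) v = 0
    · obtain ⟨m, hmN, hm⟩ := ih h
      exact ⟨m, hmN.trans N.lt_succ_self, hm⟩
    · exact ⟨N, N.lt_succ_self, h, hN⟩

theorem finrank_span_pow_apply_eq_succ_iff {m N : ℕ} {v : V} (hN : (L ^ N) v = 0) :
    finrank K (span K ((fun i ↦ (L ^ i) v) '' Iio N)) = m + 1 ↔
      (L ^ (m + 1)) v = 0 ∧ (L ^ m) v ≠ 0 := by
  constructor
  · intro hrank
    have hv : v ≠ 0 := by
      rintro rfl
      rw [span_eq_bot.mpr (by rintro - ⟨i, -, rfl⟩; exact map_zero _), finrank_bot] at hrank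
      exact m.succ_ne_zero hrank.symm
    obtain ⟨m', hmN, hm', hm'_succ⟩ := L.exists_pow_apply_ne_zero_and_pow_succ_apply_eq_zero hv hN
    obtain rfl : m' = m := by
      simpa [L.finrank_span_pow_apply hm' hm'_succ hmN] using hrank
    exact ⟨hm'_succ, hm'⟩
  · rintro ⟨hm', hm⟩
    refine L.finrank_span_pow_apply hm hm' ?_
    by_contra! h
    exact hm (L.pow_apply_eq_zero_of_le h hN)

theorem finrank_span_pow_apply_eq_zero_iff [FiniteDimensional K V] {N : ℕ} (hN : 0 < N)
    {v : V} : finrank K (span K ((fun i ↦ (L ^ i) v) '' Iio N)) = 0 ↔ v = 0 := by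
  rw [Submodule.finrank_eq_zero, span_eq_bot, forall_mem_image]
  exact ⟨fun h ↦ by simpa using h (mem_Iio.mpr hN), fun hv i _ ↦ by rw [hv, map_zero]⟩

end Cyclic

section KernelDimension

variable {K V : Type*} [Field K] [AddCommGroup V] [Module K V] [FiniteDimensional K V]
  (L : Module.End K V)

theorem finrank_ker_pow_add_le (a b : ℕ) :
    finrank K (LinearMap.ker (L ^ (a + b))) ≤
      finrank K (LinearMap.ker (L ^ a)) + finrank K (LinearMap.ker (L ^ b)) := by
  rw [pow_add, Module.End.mul_eq_comp]
  exact LinearMap.finrank_ker_comp_le _ _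

theorem finrank_ker_pow_le (j : ℕ) :
    finrank K (LinearMap.ker (L ^ j)) ≤ j * finrank K (LinearMap.ker L) := by
  induction j with
  | zero => simp [Module.End.one_eq_id]
  | succ j ih =>
    have := L.finrank_ker_pow_add_le j 1
    rw [pow_one] at this
    rw [Nat.succ_mul]
    omega

theorem finrank_ker_pow_of_finrank_ker_le_one (h1 : finrank K (LinearMap.ker L) ≤ 1)
    (hL : L ^ finrank K V = 0) {j : ℕ} (hj : j ≤ finrank K V) :
    finrank K (LinearMap.ker (L ^ j)) = j := by
  have hsum := L.finrank_ker_pow_add_le j (finrank K V - j)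
  rw [Nat.add_sub_cancel' hj, hL, LinearMap.ker_zero, finrank_top] at hsum
  have := L.finrank_ker_pow_le j
  have := L.finrank_ker_pow_le (finrank K V - j)
  have := Nat.mul_le_mul_left j h1
  have := Nat.mul_le_mul_left (finrank K V - j) h1
  omega

theorem natCard_finrank_span_pow_apply_eq_succ [Finite V]
    (h1 : finrank K (LinearMap.ker L) ≤ 1) (hL : L ^ finrank K V = 0) {m : ℕ}
    (hm : m < finrank K V) :
    Nat.card {v : V // finrank K (span K ((fun i ↦ (L ^ i) v) '' Iio (finrank K V))) = m + 1} =
      Nat.card K ^ (m + 1) - Nat.card K ^ m := by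
  have hset : {v : V | finrank K (span K ((fun i ↦ (L ^ i) v) '' Iio (finrank K V))) = m + 1} =
      (LinearMap.ker (L ^ (m + 1)) : Set V) \ LinearMap.ker (L ^ m) := by
    ext v
    have hv : (L ^ finrank K V) v = 0 := by rw [hL, LinearMap.zero_apply]
    simp [L.finrank_span_pow_apply_eq_succ_iff hv]
  rw [← Set.coe_ofPred, hset, natCard_sdiff_of_le (fun v ↦ L.pow_apply_eq_zero_of_le m.le_succ),
    natCard_eq_pow_finrank (K := K) (V := LinearMap.ker (L ^ (m + 1))),
    natCard_eq_pow_finrank (K := K) (V := LinearMap.ker (L ^ m)),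
    L.finrank_ker_pow_of_finrank_ker_le_one h1 hL hm,
    L.finrank_ker_pow_of_finrank_ker_le_one h1 hL hm.le]

end KernelDimension

end Module.End

namespace FiniteField

variable (K L : Type*) [Field K] [Fintype K] [Field L] [Algebra K L]

theorem frobeniusAlgHom_toLinearMap_pow_apply (i : ℕ) (x : L) :
    ((frobeniusAlgHom K L).toLinearMap ^ i) x = x ^ Fintype.card K ^ i := by
  simp [Module.End.pow_apply, coe_frobeniusAlgHom, pow_iterate]

theorem conjSpan_eq_span_frobeniusAlgHom_toLinearMap_sub_one_pow (n : ℕ) (α : L) :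
    conjSpan K n α =
      span K ((fun i ↦ (((frobeniusAlgHom K L).toLinearMap - 1) ^ i) α) '' Iio n) := by
  simp only [Module.End.span_sub_one_pow_apply_eq, frobeniusAlgHom_toLinearMap_pow_apply,
    conjSpan]

theorem finrank_conjSpan (n : ℕ) (α : L) :
    finrank K (conjSpan K n α) =
      finrank K (span K ((fun i ↦ (((frobeniusAlgHom K L).toLinearMap - 1) ^ i) α) '' Iio n)) := by
  rw [conjSpan_eq_span_frobeniusAlgHom_toLinearMap_sub_one_pow]

variable [Finite L]

theorem frobeniusAlgHom_toLinearMap_pow_finrank :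
    (frobeniusAlgHom K L).toLinearMap ^ finrank K L = 1 := by
  rw [← orderOf_frobeniusAlgHom, ← AlgHom.toEnd_apply, ← map_pow, pow_orderOf_eq_one, map_one]

theorem frobeniusAlgHom_toLinearMap_sub_one_pow_finrank (p t : ℕ) [ExpChar K p]
    (h : finrank K L = p ^ t) : ((frobeniusAlgHom K L).toLinearMap - 1) ^ finrank K L = 0 := by
  have : ExpChar (Module.End K L) p := expChar_of_injective_algebraMap (algebraMap K _).injective p
  rw [h, sub_pow_expChar_pow_of_commute _ _ (Commute.one_right _), ← h,
    frobeniusAlgHom_toLinearMap_pow_finrank, one_pow, sub_self]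

theorem finrank_ker_frobeniusAlgHom_toLinearMap_sub_one_le_one :
    finrank K (LinearMap.ker ((frobeniusAlgHom K L).toLinearMap - 1)) ≤ 1 := by
  have hq := Fintype.one_lt_card (α := K)
  have hroots : (LinearMap.ker ((frobeniusAlgHom K L).toLinearMap - 1) : Set L) ⊆
      (X ^ Fintype.card K - X : K[X]).rootSet L := by
    intro x hx
    rw [mem_rootSet]
    simp_all [sub_eq_zero, X_pow_card_sub_X_ne_zero K hq]
  have hcard := (Nat.card_coe_set_eq _).trans_le <|
    (ncard_le_ncard hroots (rootSet_finite _ _)).trans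
      ((ncard_rootSet_le _ _).trans_eq (X_pow_card_sub_X_natDegree_eq K hq))
  rw [natCard_eq_pow_finrank (K := K), Nat.card_eq_fintype_card] at hcard
  exact (Nat.pow_le_pow_iff_right hq).mp (by simpa using hcard)

end FiniteField

open Module in
/-- Let `F_q` be a finite field of characteristic `p`, let `t ≥ 0` and `n = p^t`, and let
`F_{qⁿ}/F_q` be an extension of degree `n`.  Then the number of `k`-normal elements of
`F_{qⁿ}` over `F_q` equals `1` if `k = n`, and equals `(q-1)·q^(n-k-1)` for every
`0 ≤ k ≤ n - 1`. -/
theorem stmt_18 (Fq Fqn : Type*) [Field Fq] [Fintype Fq] [Field Fqn] [Fintype Fqn]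
    [Algebra Fq Fqn] (p : ℕ) (hp : p.Prime) [CharP Fq p]
    (q : ℕ) (hq : q = Fintype.card Fq) (t : ℕ) (n : ℕ) (hn : n = p ^ t)
    (hdeg : Module.finrank Fq Fqn = n) :
    (Nat.card {α : Fqn // Module.finrank Fq (conjSpan Fq n α) = n - n} = 1) ∧
      ∀ k : ℕ, k ≤ n - 1 →
        Nat.card {α : Fqn // Module.finrank Fq (conjSpan Fq n α) = n - k} =
          (q - 1) * q ^ (n - k - 1) := by
  have : ExpChar Fq p := .prime hp
  subst hq hdeg
  simp only [FiniteField.finrank_conjSpan]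
  set N : Module.End Fq Fqn := (FiniteField.frobeniusAlgHom Fq Fqn).toLinearMap - 1
  have hN : N ^ finrank Fq Fqn = 0 :=
    FiniteField.frobeniusAlgHom_toLinearMap_sub_one_pow_finrank Fq Fqn p t hn
  have hker : finrank Fq (LinearMap.ker N) ≤ 1 :=
    FiniteField.finrank_ker_frobeniusAlgHom_toLinearMap_sub_one_le_one Fq Fqn
  have hpos : 0 < finrank Fq Fqn := finrank_pos
  refine ⟨?_, fun k hk ↦ ?_⟩
  · simp only [Nat.sub_self, N.finrank_span_pow_apply_eq_zero_iff hpos, Nat.card_unique]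
  · obtain ⟨m, hm⟩ : ∃ m, finrank Fq Fqn - k = m + 1 := ⟨finrank Fq Fqn - k - 1, by omega⟩
    rw [hm, Nat.add_sub_cancel, N.natCard_finrank_span_pow_apply_eq_succ hker hN (by omega),
      Nat.card_eq_fintype_card, pow_succ', Nat.sub_one_mul]
end
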